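/- arXiv:2201.00639 — 4 statements merged into one kernel-verified Lean document; each statement's English description precedes it below -/
import Mathlib

section
/- Let Φ : X → ℝ ∪ {∞} be proper, m ∈ ℕ, a > 0, and let {x^k} satisfy the nonmonotone decrease condition: Φ(x^{k+1}) + a‖x^{k+1} − x^k‖² ≤ max_{j = max(0,k−m),…,k} Φ(x^j) for all k. Define ℓ(k) as the maximum index attaining this max. Then the sequence {Φ(x^{ℓ(k)})} is nonincreasing, i.e., Φ(x^{ℓ(k+1)}) ≤ Φ(x^{ℓ(k)}) for all k ∈ ℕ. -/
/-! The window `[k + 1 - m, k + 1]` lies in `[k - m, k] ∪ {k + 1}`, and the decrease condition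
bounds the new entry `Φ (x (k + 1))` by the maximum over the old window. -/

theorem Finset.sup'_Icc_succ_le_of_le {α : Type*} [SemilatticeSup α] (f : ℕ → α) (m k : ℕ)
    (h : f (k + 1) ≤ (Finset.Icc (k - m) k).sup' (Finset.nonempty_Icc.mpr (Nat.sub_le k m)) f) :
    (Finset.Icc (k + 1 - m) (k + 1)).sup' (Finset.nonempty_Icc.mpr (Nat.sub_le (k + 1) m)) f ≤
      (Finset.Icc (k - m) k).sup' (Finset.nonempty_Icc.mpr (Nat.sub_le k m)) f := by
  refine Finset.sup'_le _ _ fun j hj => ?_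
  obtain ⟨hlo, hhi⟩ := Finset.mem_Icc.mp hj
  rcases hhi.eq_or_lt with rfl | hlt
  · exact h
  · exact Finset.le_sup' f (Finset.mem_Icc.mpr ⟨by omega, by omega⟩)

theorem stmt3_general {X : Type*} [NormedAddCommGroup X]
    (Φ : X → EReal)
    (m : ℕ) (a : ℝ) (ha : 0 < a) (x : ℕ → X) (ℓ : ℕ → ℕ)
    (hH1 : ∀ k, Φ (x (k + 1)) + ((a * ‖x (k + 1) - x k‖ ^ 2 : ℝ) : EReal) ≤
      (Finset.Icc (k - m) k).sup' (Finset.nonempty_Icc.mpr (Nat.sub_le k m))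
        (fun j => Φ (x j)))
    (hℓmax : ∀ k, Φ (x (ℓ k)) =
      (Finset.Icc (k - m) k).sup' (Finset.nonempty_Icc.mpr (Nat.sub_le k m))
        (fun j => Φ (x j))) :
    ∀ k, Φ (x (ℓ (k + 1))) ≤ Φ (x (ℓ k)) := by
  intro k
  have hpenalty : (0 : EReal) ≤ ((a * ‖x (k + 1) - x k‖ ^ 2 : ℝ) : EReal) := by
    exact_mod_cast by positivity
  rw [hℓmax, hℓmax]
  exact Finset.sup'_Icc_succ_le_of_le _ m k ((le_add_of_nonneg_right hpenalty).trans (hH1 k))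

theorem stmt3 {X : Type*} [NormedAddCommGroup X] [InnerProductSpace ℝ X]
    [FiniteDimensional ℝ X]
    (Φ : X → EReal) (hne_bot : ∀ y, Φ y ≠ ⊥) (hproper : ∃ y, Φ y ≠ ⊤)
    (m : ℕ) (a : ℝ) (ha : 0 < a) (x : ℕ → X) (ℓ : ℕ → ℕ)
    (hH1 : ∀ k, Φ (x (k + 1)) + ((a * ‖x (k + 1) - x k‖ ^ 2 : ℝ) : EReal) ≤
      (Finset.Icc (k - m) k).sup' (Finset.nonempty_Icc.mpr (Nat.sub_le k m))
        (fun j => Φ (x j)))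
    (hℓmem : ∀ k, ℓ k ∈ Finset.Icc (k - m) k)
    (hℓmax : ∀ k, Φ (x (ℓ k)) =
      (Finset.Icc (k - m) k).sup' (Finset.nonempty_Icc.mpr (Nat.sub_le k m))
        (fun j => Φ (x j)))
    (hℓtop : ∀ k, ∀ j ∈ Finset.Icc (k - m) k, Φ (x j) = Φ (x (ℓ k)) → j ≤ ℓ k) :
    ∀ k, Φ (x (ℓ (k + 1))) ≤ Φ (x (ℓ k)) :=
  stmt3_general Φ m a ha x ℓ hH1 hℓmax
end

section
/- Let f : X → ℝ be differentiable with L_f-Lipschitz gradient and g : X → ℝ ∪ {∞} proper lsc and bounded below. Fix τ > 0 with τ L_f < 1, a point y ∈ X, and let x⁺ be any element of the proximal mapping P_τ g(y − τ ∇f(y)), i.e., a minimizer of z ↦ (1/(2τ))‖z − (y − τ∇f(y))‖² + g(z). Then for F = f + g and any x ∈ dom g: F(x⁺) − F(x) ≤ −((τ⁻¹ − L_f)/4)‖x⁺ − x‖² + ((τ⁻¹ + L_f)²/(τ⁻¹ − L_f))‖x − y‖². -/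
/-!
Comparing the prox objective at `x⁺` with its value at the competitor `x` and bounding `f` above at
`x⁺` and below at `x` by its linearization at `y` (descent lemma) gives
`F x⁺ + (τ⁻¹ - L)/2 ‖x⁺ - y‖² ≤ F x + (τ⁻¹ + L)/2 ‖x - y‖²`. Young's inequality
`‖x⁺ - x‖² ≤ 2‖x⁺ - y‖² + 2‖x - y‖²` then trades `‖x⁺ - y‖` for `‖x⁺ - x‖`, and
`τ⁻¹ ≤ (τ⁻¹ + L)² / (τ⁻¹ - L)` absorbs the remaining coefficient of `‖x - y‖²`.
-/

open InnerProductSpace Set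

theorem norm_sub_sub_fderiv_le_of_lipschitzWith {E F : Type*} [NormedAddCommGroup E]
    [NormedSpace ℝ E] [NormedAddCommGroup F] [NormedSpace ℝ F]
    {f : E → F} {f' : E → E →L[ℝ] F} (hf : ∀ x, HasFDerivAt f (f' x) x)
    {L : NNReal} (hL : LipschitzWith L f') (a b : E) :
    ‖f b - f a - f' a (b - a)‖ ≤ L / 2 * ‖b - a‖ ^ 2 := by
  set v := b - a
  let ψ : ℝ → F := fun t => f (a + t • v) - f a - t • f' a v
  have hψ : ∀ t, HasDerivAt ψ (f' (a + t • v) v - f' a v) t := fun t => by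
    have hline : HasDerivAt (fun t : ℝ => a + t • v) v t := by
      simpa using ((hasDerivAt_id t).smul_const v).const_add a
    exact (((hf _).comp_hasDerivAt t hline).sub_const (f a)).sub
      (by simpa using (hasDerivAt_id t).smul_const (f' a v))
  have hbound : ∀ t ∈ Ico (0 : ℝ) 1, ‖f' (a + t • v) v - f' a v‖ ≤ L * t * ‖v‖ ^ 2 :=
    fun t ht => calc
      ‖f' (a + t • v) v - f' a v‖ ≤ ‖f' (a + t • v) - f' a‖ * ‖v‖ :=
        (f' (a + t • v) - f' a).le_opNorm v
      _ ≤ L * ‖(a + t • v) - a‖ * ‖v‖ := by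
        gcongr
        simpa [dist_eq_norm] using hL.dist_le_mul (a + t • v) a
      _ = L * t * ‖v‖ ^ 2 := by
        rw [add_sub_cancel_left, norm_smul, Real.norm_of_nonneg ht.1]; ring
  have hB : ∀ t : ℝ, HasDerivAt (fun t => L / 2 * t ^ 2 * ‖v‖ ^ 2) (L * t * ‖v‖ ^ 2) t :=
    fun t => by
      refine (((hasDerivAt_pow 2 t).const_mul ((L : ℝ) / 2)).mul_const (‖v‖ ^ 2)).congr_deriv ?_
      push_cast; ring
  have := image_norm_le_of_norm_deriv_right_le_deriv_boundary
    (fun t _ => (hψ t).continuousAt.continuousWithinAt) (fun t _ => (hψ t).hasDerivWithinAt)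
    (by simp [ψ]) hB hbound (right_mem_Icc.2 zero_le_one)
  simpa [ψ, v] using this

theorem abs_sub_sub_inner_le_of_lipschitzWith_gradient {X : Type*} [NormedAddCommGroup X]
    [InnerProductSpace ℝ X] [CompleteSpace X]
    {f : X → ℝ} {f' : X → X} (hf : ∀ x, HasGradientAt f (f' x) x)
    {L : NNReal} (hL : LipschitzWith L f') (a b : X) :
    |f b - f a - ⟪f' a, b - a⟫_ℝ| ≤ L / 2 * ‖b - a‖ ^ 2 := by
  have hL' : LipschitzWith L (fun x => toDual ℝ X (f' x)) :=
    LipschitzWith.of_dist_le_mul fun x y => by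
      simpa [dist_eq_norm, ← map_sub] using hL.dist_le_mul x y
  simpa using norm_sub_sub_fderiv_le_of_lipschitzWith (fun x => (hf x).hasFDerivAt) hL' a b

theorem proxGrad_step_le {X : Type*} [NormedAddCommGroup X]
    [InnerProductSpace ℝ X] [CompleteSpace X]
    {f : X → ℝ} {f' : X → X} (hf : ∀ x, HasGradientAt f (f' x) x)
    {L : NNReal} (hL : LipschitzWith L f') {τ : ℝ} (hτ : 0 < τ) (hτL : τ * L < 1)
    {y xplus x : X} {gxplus gx : ℝ}
    (hmin : 1 / (2 * τ) * ‖xplus - (y - τ • f' y)‖ ^ 2 + gxplus ≤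
      1 / (2 * τ) * ‖x - (y - τ • f' y)‖ ^ 2 + gx) :
    f xplus + gxplus + (τ⁻¹ - L) / 4 * ‖xplus - x‖ ^ 2 ≤
      f x + gx + (τ⁻¹ + L) ^ 2 / (τ⁻¹ - L) * ‖x - y‖ ^ 2 := by
  -- Completing the square: up to a constant, the prox objective is the linearization of `f` at
  -- `y` plus `‖z - y‖² / (2τ)`.
  have hprox : ∀ z, 1 / (2 * τ) * ‖z - (y - τ • f' y)‖ ^ 2 =
      τ⁻¹ / 2 * ‖z - y‖ ^ 2 + ⟪f' y, z - y⟫_ℝ + τ / 2 * ‖f' y‖ ^ 2 := fun z => by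
    rw [show z - (y - τ • f' y) = (z - y) + τ • f' y by abel, norm_add_sq_real,
      real_inner_smul_right, norm_smul, real_inner_comm, mul_pow, Real.norm_of_nonneg hτ.le]
    field_simp
  rw [hprox, hprox] at hmin
  have hup := abs_le.1 (abs_sub_sub_inner_le_of_lipschitzWith_gradient hf hL y xplus)
  have hlow := abs_le.1 (abs_sub_sub_inner_le_of_lipschitzWith_gradient hf hL y x)
  have hgap : 0 < τ⁻¹ - L := by
    rw [show τ⁻¹ - L = τ⁻¹ * (1 - τ * L) by field_simp]
    exact mul_pos (inv_pos.2 hτ) (sub_pos.2 hτL)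
  have hyoung : ‖xplus - x‖ ^ 2 ≤ 2 * ‖xplus - y‖ ^ 2 + 2 * ‖x - y‖ ^ 2 := by
    have := parallelogram_law_with_norm ℝ (xplus - y) (x - y)
    rw [sub_sub_sub_cancel_right] at this
    nlinarith [sq_nonneg ‖xplus - y + (x - y)‖]
  have hcoef : τ⁻¹ ≤ (τ⁻¹ + L) ^ 2 / (τ⁻¹ - L) := by
    rw [le_div_iff₀ hgap]
    nlinarith [L.coe_nonneg]
  have hstep : f xplus + gxplus + (τ⁻¹ - L) / 2 * ‖xplus - y‖ ^ 2 ≤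
      f x + gx + (τ⁻¹ + L) / 2 * ‖x - y‖ ^ 2 := by
    linarith
  linarith [mul_le_mul_of_nonneg_left hyoung hgap.le,
    mul_le_mul_of_nonneg_left hcoef (sq_nonneg ‖x - y‖)]

theorem stmt11_general {X : Type*} [NormedAddCommGroup X] [InnerProductSpace ℝ X]
    [FiniteDimensional ℝ X]
    (f : X → ℝ) (f' : X → X) (hf : ∀ y, HasGradientAt f (f' y) y)
    (Lf : NNReal) (hLf : LipschitzWith Lf f')
    (g : X → EReal) (hne_bot : ∀ y, g y ≠ ⊥)
    (τ : ℝ) (hτ : 0 < τ) (hτL : τ * (Lf : ℝ) < 1)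
    (y xplus : X)
    (hmin : ∀ z : X,
      ((1 / (2 * τ) * ‖xplus - (y - τ • f' y)‖ ^ 2 : ℝ) : EReal) + g xplus ≤
      ((1 / (2 * τ) * ‖z - (y - τ • f' y)‖ ^ 2 : ℝ) : EReal) + g z)
    (x : X) (hx : g x ≠ ⊤) :
    (f xplus : EReal) + g xplus +
        (((τ⁻¹ - (Lf : ℝ)) / 4 * ‖xplus - x‖ ^ 2 : ℝ) : EReal) ≤
      (f x : EReal) + g x +
        (((τ⁻¹ + (Lf : ℝ)) ^ 2 / (τ⁻¹ - (Lf : ℝ)) * ‖x - y‖ ^ 2 : ℝ) : EReal) := by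
  have hmin_x := hmin x
  lift g x to ℝ using ⟨hx, hne_bot x⟩ with gx
  have hxplus : g xplus ≠ ⊤ := fun h => by
    rw [h, EReal.add_top_of_ne_bot (EReal.coe_ne_bot _), top_le_iff, ← EReal.coe_add] at hmin_x
    exact EReal.coe_ne_top _ hmin_x
  lift g xplus to ℝ using ⟨hxplus, hne_bot xplus⟩ with gxplus
  norm_cast at hmin_x ⊢
  exact proxGrad_step_le hf hLf hτ hτL hmin_x

theorem stmt11 {X : Type*} [NormedAddCommGroup X] [InnerProductSpace ℝ X]
    [FiniteDimensional ℝ X]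
    (f : X → ℝ) (f' : X → X) (hf : ∀ y, HasGradientAt f (f' y) y)
    (Lf : NNReal) (hLf : LipschitzWith Lf f')
    (g : X → EReal) (hlsc : LowerSemicontinuous g) (hne_bot : ∀ y, g y ≠ ⊥)
    (hproper : ∃ y, g y ≠ ⊤) (hbdd : ∃ B : ℝ, ∀ y, (B : EReal) ≤ g y)
    (τ : ℝ) (hτ : 0 < τ) (hτL : τ * (Lf : ℝ) < 1)
    (y xplus : X)
    (hmin : ∀ z : X,
      ((1 / (2 * τ) * ‖xplus - (y - τ • f' y)‖ ^ 2 : ℝ) : EReal) + g xplus ≤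
      ((1 / (2 * τ) * ‖z - (y - τ • f' y)‖ ^ 2 : ℝ) : EReal) + g z)
    (x : X) (hx : g x ≠ ⊤) :
    (f xplus : EReal) + g xplus +
        (((τ⁻¹ - (Lf : ℝ)) / 4 * ‖xplus - x‖ ^ 2 : ℝ) : EReal) ≤
      (f x : EReal) + g x +
        (((τ⁻¹ + (Lf : ℝ)) ^ 2 / (τ⁻¹ - (Lf : ℝ)) * ‖x - y‖ ^ 2 : ℝ) : EReal) :=
  stmt11_general f f' hf Lf hLf g hne_bot τ hτ hτL y xplus hmin x hx
end

section
/- Let f : X → ℝ be differentiable with L-Lipschitz gradient, g : X → ℝ ∪ {∞} proper lsc, τ > 0, y ∈ X, and x⁺ ∈ P_τ g(y − τ∇f(y)). Then w := ∇f(x⁺) − ∇f(y) − τ⁻¹(x⁺ − y) belongs to ∂F(x⁺) where F = f + g, and ‖w‖ ≤ (L + τ⁻¹)‖x⁺ − y‖. -/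
open Filter Topology RealInnerProductSpace

variable {X : Type*} [NormedAddCommGroup X] [InnerProductSpace ℝ X] [FiniteDimensional ℝ X]

/-- The regular (Fréchet) subdifferential of an extended-real-valued function. -/
def regularSubdiff (Φ : X → EReal) (x : X) : Set X :=
  {v | Φ x ≠ ⊤ ∧ ∀ ε : ℝ, 0 < ε → ∀ᶠ y in 𝓝 x,
      Φ x + (((inner ℝ v (y - x) : ℝ)) : EReal) - ((ε * ‖y - x‖ : ℝ) : EReal) ≤ Φ y}

/-- The limiting (Mordukhovich) subdifferential. -/
def limitingSubdiff (Φ : X → EReal) (x : X) : Set X :=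
  {v | ∃ (xs : ℕ → X) (vs : ℕ → X),
      Tendsto xs atTop (𝓝 x) ∧
      Tendsto (fun n => Φ (xs n)) atTop (𝓝 (Φ x)) ∧
      (∀ n, vs n ∈ regularSubdiff Φ (xs n)) ∧ Tendsto vs atTop (𝓝 v)}

/-! Optimality of `x⁺` in the proximal subproblem (Fermat's rule) makes
`-(∇f(y) + τ⁻¹(x⁺ - y))` a Fréchet subgradient of `g` at `x⁺`. Adding a differentiable function
shifts Fréchet subgradients exactly by its gradient, so `w = ∇f(x⁺) - ∇f(y) - τ⁻¹(x⁺ - y)` is a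
Fréchet subgradient of `f + g`, hence a limiting one along constant sequences. The bound on `‖w‖`
is the triangle inequality together with the Lipschitz continuity of `∇f`. -/

theorem EReal.add_coe_sub_le_of_coe_add_le {a b : EReal} {r s : ℝ}
    (h : (r : EReal) + a ≤ s + b) : a + ((r - s : ℝ) : EReal) ≤ b :=
  calc a + ((r - s : ℝ) : EReal) = ((r : EReal) + a) + ((-s : ℝ) : EReal) := by
        rw [sub_eq_add_neg, EReal.coe_add]
        ac_rfl
    _ ≤ ((s : EReal) + b) + ((-s : ℝ) : EReal) := add_le_add_left h _
    _ = b := by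
        rw [add_comm, ← add_assoc, ← EReal.coe_add, neg_add_cancel, EReal.coe_zero, zero_add]

theorem LipschitzWith.norm_sub_sub_smul_sub_le {F : Type*} [NormedAddCommGroup F]
    [NormedSpace ℝ F] {f' : F → F} {L : NNReal} (hL : LipschitzWith L f') {c : ℝ} (hc : 0 ≤ c)
    (x y : F) : ‖f' x - f' y - c • (x - y)‖ ≤ (L + c) * ‖x - y‖ :=
  calc ‖f' x - f' y - c • (x - y)‖ ≤ ‖f' x - f' y‖ + ‖c • (x - y)‖ := _root_.norm_sub_le _ _
    _ ≤ L * ‖x - y‖ + c * ‖x - y‖ := by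
        rw [norm_smul, Real.norm_of_nonneg hc]
        exact add_le_add_left (hL.norm_sub_le x y) _
    _ = (L + c) * ‖x - y‖ := by ring

section

variable {E : Type*} [NormedAddCommGroup E] [InnerProductSpace ℝ E]

theorem hasGradientAt_one_div_two_mul_mul_norm_sub_sq [CompleteSpace E] (τ : ℝ) (a x : E) :
    HasGradientAt (fun z => 1 / (2 * τ) * ‖z - a‖ ^ 2) (τ⁻¹ • (x - a)) x := by
  rw [hasGradientAt_iff_hasFDerivAt]
  refine ((((hasFDerivAt_id x).sub_const a).norm_sq).const_mul (1 / (2 * τ))).congr_fderiv ?_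
  ext v
  simp only [one_div, mul_inv_rev, id_eq, map_sub, ContinuousLinearMap.comp_id,
    smul_apply, sub_apply, coe_innerSL_apply, nsmul_eq_mul,
    Nat.cast_ofNat, smul_eq_mul, map_smul, InnerProductSpace.toDual_apply_apply]
  ring

theorem mem_regularSubdiff_iff {Φ : E → EReal} {x v : E} :
    v ∈ regularSubdiff Φ x ↔ Φ x ≠ ⊤ ∧ ∀ ε : ℝ, 0 < ε → ∀ᶠ z in 𝓝 x,
      Φ x + ((⟪v, z - x⟫ - ε * ‖z - x‖ : ℝ) : EReal) ≤ Φ z := by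
  simp only [regularSubdiff, Set.mem_ofPred_eq, EReal.coe_sub, add_sub_assoc]

theorem regularSubdiff_subset_limitingSubdiff (Φ : E → EReal) (x : E) :
    regularSubdiff Φ x ⊆ limitingSubdiff Φ x := fun _ hv =>
  ⟨fun _ => x, fun _ => _, tendsto_const_nhds, tendsto_const_nhds, fun _ => hv,
    tendsto_const_nhds⟩

variable [CompleteSpace E]

theorem IsLocalMin.neg_gradient_mem_regularSubdiff {q : E → ℝ} {g : E → EReal} {q' x : E}
    (hmin : IsLocalMin (fun z => (q z : EReal) + g z) x) (hq : HasGradientAt q q' x)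
    (hgx : g x ≠ ⊤) : -q' ∈ regularSubdiff g x := by
  refine mem_regularSubdiff_iff.2 ⟨hgx, fun ε hε => ?_⟩
  filter_upwards [hmin, (hasGradientAt_iff_isLittleO.1 hq).def hε] with z hz hqz
  rw [Real.norm_eq_abs, abs_le] at hqz
  calc g x + ((⟪-q', z - x⟫ - ε * ‖z - x‖ : ℝ) : EReal) ≤ g x + ((q x - q z : ℝ) : EReal) := by
        refine add_le_add_right (EReal.coe_le_coe_iff.2 ?_) _
        rw [inner_neg_left]
        linarith [hqz.2]
    _ ≤ g z := EReal.add_coe_sub_le_of_coe_add_le hz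

theorem HasGradientAt.add_mem_regularSubdiff {f : E → ℝ} {g : E → EReal} {f' v x : E}
    (hf : HasGradientAt f f' x) (hv : v ∈ regularSubdiff g x) :
    f' + v ∈ regularSubdiff (fun z => (f z : EReal) + g z) x := by
  obtain ⟨hgx, hg⟩ := mem_regularSubdiff_iff.1 hv
  refine mem_regularSubdiff_iff.2 ⟨(EReal.add_lt_top (EReal.coe_ne_top _) hgx).ne,
    fun ε hε => ?_⟩
  filter_upwards [hg _ (half_pos hε), (hasGradientAt_iff_isLittleO.1 hf).def (half_pos hε)]
    with z hgz hfz
  rw [Real.norm_eq_abs, abs_le] at hfz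
  calc (f x : EReal) + g x + ((⟪f' + v, z - x⟫ - ε * ‖z - x‖ : ℝ) : EReal)
      = ((f x + ⟪f', z - x⟫ - ε / 2 * ‖z - x‖ : ℝ) : EReal)
          + (g x + ((⟪v, z - x⟫ - ε / 2 * ‖z - x‖ : ℝ) : EReal)) := by
        rw [add_left_comm, ← EReal.coe_add, add_comm (f x : EReal), add_assoc, ← EReal.coe_add,
          inner_add_left]
        ring_nf
    _ ≤ f z + g z := add_le_add (EReal.coe_le_coe_iff.2 (by linarith [hfz.1])) hgz

end

theorem stmt13_general
    (f : X → ℝ) (f' : X → X) (hf : ∀ y, HasGradientAt f (f' y) y)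
    (L : NNReal) (hL : LipschitzWith L f')
    (g : X → EReal)
    (hproper : ∃ y, g y ≠ ⊤)
    (τ : ℝ) (hτ : 0 < τ) (y xplus : X)
    (hmin : ∀ z : X,
      ((1 / (2 * τ) * ‖xplus - (y - τ • f' y)‖ ^ 2 : ℝ) : EReal) + g xplus ≤
      ((1 / (2 * τ) * ‖z - (y - τ • f' y)‖ ^ 2 : ℝ) : EReal) + g z) :
    f' xplus - f' y - τ⁻¹ • (xplus - y) ∈
        limitingSubdiff (fun z => (f z : EReal) + g z) xplus ∧
      ‖f' xplus - f' y - τ⁻¹ • (xplus - y)‖ ≤ ((L : ℝ) + τ⁻¹) * ‖xplus - y‖ := by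
  have hgx : g xplus ≠ ⊤ := by
    obtain ⟨z, hz⟩ := hproper
    have := ne_top_of_le_ne_top hz (EReal.add_coe_sub_le_of_coe_add_le (hmin z))
    exact fun h => this (by rw [h, EReal.top_add_coe])
  have hprox : -(f' y + τ⁻¹ • (xplus - y)) ∈ regularSubdiff g xplus := by
    have hloc : IsLocalMin
        (fun z => ((1 / (2 * τ) * ‖z - (y - τ • f' y)‖ ^ 2 : ℝ) : EReal) + g z) xplus :=
      Eventually.of_forall hmin
    convert hloc.neg_gradient_mem_regularSubdiff
      (hasGradientAt_one_div_two_mul_mul_norm_sub_sq τ _ xplus) hgx using 2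
    rw [smul_sub, smul_sub, smul_sub, smul_smul, inv_mul_cancel₀ hτ.ne', one_smul]
    abel
  refine ⟨regularSubdiff_subset_limitingSubdiff _ _ ?_,
    hL.norm_sub_sub_smul_sub_le (inv_nonneg.2 hτ.le) _ _⟩
  rw [sub_sub, sub_eq_add_neg]
  exact (hf xplus).add_mem_regularSubdiff hprox

theorem stmt13
    (f : X → ℝ) (f' : X → X) (hf : ∀ y, HasGradientAt f (f' y) y)
    (L : NNReal) (hL : LipschitzWith L f')
    (g : X → EReal) (hlsc : LowerSemicontinuous g) (hne_bot : ∀ y, g y ≠ ⊥)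
    (hproper : ∃ y, g y ≠ ⊤)
    (τ : ℝ) (hτ : 0 < τ) (y xplus : X)
    (hmin : ∀ z : X,
      ((1 / (2 * τ) * ‖xplus - (y - τ • f' y)‖ ^ 2 : ℝ) : EReal) + g xplus ≤
      ((1 / (2 * τ) * ‖z - (y - τ • f' y)‖ ^ 2 : ℝ) : EReal) + g z) :
    f' xplus - f' y - τ⁻¹ • (xplus - y) ∈
        limitingSubdiff (fun z => (f z : EReal) + g z) xplus ∧
      ‖f' xplus - f' y - τ⁻¹ • (xplus - y)‖ ≤ ((L : ℝ) + τ⁻¹) * ‖xplus - y‖ :=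
  stmt13_general f f' hf L hL g hproper τ hτ y xplus hmin
end

section
/- Let {Ξ_j} be a nonnegative sequence with ∑_{j=1}^∞ Ξ_j < ∞, and let {x^k} satisfy: for all k ≥ k̂, ‖x^{k+1} − x^k‖ ≤ √(C·Ξ_k·(φ_k − φ_{k+1})), where {φ_k} is a nonincreasing nonnegative sequence and C > 0. Then ∑_{k=k̂}^∞ ‖x^{k+1} − x^k‖ < ∞, and hence {x^k} is a Cauchy sequence. -/
/-!
By AM–GM, `√(C Ξ_k (φ_k - φ_{k+1})) ≤ (C Ξ_k + (φ_k - φ_{k+1})) / 2`. The first summand is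
summable by assumption and the second telescopes, its partial sums being bounded by `φ_0 - c`
for any lower bound `c` of `φ`. So the steps `‖x^{k+1} - x^k‖` are eventually dominated by a
summable sequence, and a sequence with summable step lengths is Cauchy.
-/

theorem Real.sqrt_mul_le_add_div_two {a b : ℝ} (ha : 0 ≤ a) (hb : 0 ≤ b) :
    √(a * b) ≤ (a + b) / 2 := by
  rw [Real.sqrt_le_left (by positivity)]
  nlinarith [sq_nonneg (a - b)]

theorem Summable.sqrt_mul {ι : Type*} {a b : ι → ℝ} (ha : ∀ i, 0 ≤ a i) (hb : ∀ i, 0 ≤ b i)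
    (hsa : Summable a) (hsb : Summable b) : Summable fun i => √(a i * b i) :=
  ((hsa.add hsb).div_const 2).of_nonneg_of_le (fun _ => Real.sqrt_nonneg _)
    fun i => Real.sqrt_mul_le_add_div_two (ha i) (hb i)

theorem summable_sub_succ_of_bddBelow {φ : ℕ → ℝ} {c : ℝ} (hφ : ∀ k, c ≤ φ k)
    (hφmono : ∀ k, φ (k + 1) ≤ φ k) : Summable fun k => φ k - φ (k + 1) := by
  refine summable_of_sum_range_le (c := φ 0 - c) (fun k => sub_nonneg.2 (hφmono k)) fun n => ?_
  rw [Finset.sum_range_sub']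
  linarith [hφ n]

theorem cauchySeq_of_summable_norm_sub_succ {E : Type*} [SeminormedAddCommGroup E] {x : ℕ → E}
    (hx : Summable fun k => ‖x (k + 1) - x k‖) : CauchySeq x :=
  cauchySeq_of_dist_le_of_summable _ (fun k => (dist_eq_norm' (x k) (x (k + 1))).le) hx

theorem stmt19_general {X : Type*} [NormedAddCommGroup X]
    (Ξ : ℕ → ℝ) (hΞ : ∀ j, 0 ≤ Ξ j) (hΞsum : Summable Ξ)
    (φ : ℕ → ℝ) (hφ : ∀ k, 0 ≤ φ k) (hφmono : ∀ k, φ (k + 1) ≤ φ k)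
    (C : ℝ) (hC : 0 < C) (x : ℕ → X) (khat : ℕ)
    (h : ∀ k, khat ≤ k → ‖x (k + 1) - x k‖ ≤ Real.sqrt (C * Ξ k * (φ k - φ (k + 1)))) :
    Summable (fun k => ‖x (k + 1) - x k‖) ∧ CauchySeq x := by
  have hbound : Summable fun k => √(C * Ξ k * (φ k - φ (k + 1))) :=
    Summable.sqrt_mul (fun k => mul_nonneg hC.le (hΞ k)) (fun k => sub_nonneg.2 (hφmono k))
      (hΞsum.mul_left C) (summable_sub_succ_of_bddBelow hφ hφmono)
  have hsum : Summable fun k => ‖x (k + 1) - x k‖ :=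
    hbound.of_norm_bounded_eventually_nat <| Filter.eventually_atTop.2
      ⟨khat, fun k hk => (norm_norm _).trans_le (h k hk)⟩
  exact ⟨hsum, cauchySeq_of_summable_norm_sub_succ hsum⟩

theorem stmt19 {X : Type*} [NormedAddCommGroup X] [InnerProductSpace ℝ X]
    [FiniteDimensional ℝ X]
    (Ξ : ℕ → ℝ) (hΞ : ∀ j, 0 ≤ Ξ j) (hΞsum : Summable Ξ)
    (φ : ℕ → ℝ) (hφ : ∀ k, 0 ≤ φ k) (hφmono : ∀ k, φ (k + 1) ≤ φ k)
    (C : ℝ) (hC : 0 < C) (x : ℕ → X) (khat : ℕ)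
    (h : ∀ k, khat ≤ k → ‖x (k + 1) - x k‖ ≤ Real.sqrt (C * Ξ k * (φ k - φ (k + 1)))) :
    Summable (fun k => ‖x (k + 1) - x k‖) ∧ CauchySeq x :=
  stmt19_general Ξ hΞ hΞsum φ hφ hφmono C hC x khat h
end
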